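/- arXiv:1412.2808 — 2 statements merged into one kernel-verified Lean document; each statement's English description precedes it below -/
import Mathlib

section
/- If Γ ⊂ T•(U \ I) is a closed conic set whose closure in T•U satisfies the conormal landing condition (closure ∩ T•_I U ⊆ N*(I)), then there exists an open neighborhood V of I such that every (x,h;ξ,η) ∈ Γ ∩ T•V has η ≠ 0. -/
/-! Take `V = U \ closure π{q ∈ Γ | η = 0}`. A point of `I` in that closure would, after
normalising covectors, yield a limit `(x,0;ξ,0)` with `|ξ| = 1` in the closure of `Γ`,
which the landing condition forbids. -/

open Set

section ConicClosure

variable {X E : Type*} [TopologicalSpace X] [NormedAddCommGroup E] [NormedSpace ℝ E]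
  [ProperSpace E]

/-- Normalising covectors puts the relevant part of `Γ` over the compact unit sphere, along
which `Prod.fst` is a closed map. -/
theorem exists_norm_eq_one_mem_closure_of_mem_closure_image_fst {Γ : Set (X × E)}
    (hconic : ∀ c : ℝ, 0 < c → ∀ q ∈ Γ, (q.1, c • q.2) ∈ Γ) (hne : ∀ q ∈ Γ, q.2 ≠ 0)
    {p : X} (hp : p ∈ closure (Prod.fst '' Γ)) :
    ∃ w : E, ‖w‖ = 1 ∧ (p, w) ∈ closure Γ := by
  let Φ : X × Metric.sphere (0 : E) 1 → X × E := fun q => (q.1, q.2)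
  have hΦ : Continuous Φ := continuous_fst.prodMk (continuous_subtype_val.comp continuous_snd)
  have himage : Prod.fst '' Γ ⊆ Prod.fst '' (Φ ⁻¹' Γ) := by
    rintro _ ⟨q, hq, rfl⟩
    have hq2 : 0 < ‖q.2‖ := norm_pos_iff.mpr (hne q hq)
    refine ⟨(q.1, ⟨‖q.2‖⁻¹ • q.2, ?_⟩), hconic _ (inv_pos.mpr hq2) q hq, rfl⟩
    simp [norm_smul, hq2.ne']
  obtain ⟨⟨x, w⟩, hxw, rfl⟩ :=
    isClosedMap_fst_of_compactSpace.closure_image_subset _ (closure_mono himage hp)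
  exact ⟨w, by simp,
    closure_mono (image_preimage_subset Φ Γ) (image_closure_subset_closure_image hΦ ⟨_, hxw, rfl⟩)⟩

end ConicClosure

theorem conormal_landing_gives_neighborhood_general (n d : ℕ)
    (U : Set ((Fin n → ℝ) × (Fin d → ℝ))) (hU : IsOpen U)
    (hIU : {p : (Fin n → ℝ) × (Fin d → ℝ) | p.2 = 0} ⊆ U)
    (Γ : Set (((Fin n → ℝ) × (Fin d → ℝ)) × ((Fin n → ℝ) × (Fin d → ℝ))))
    (hΓsub : Γ ⊆ (U \ {p : (Fin n → ℝ) × (Fin d → ℝ) | p.2 = 0}) ×ˢ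
      {v : (Fin n → ℝ) × (Fin d → ℝ) | v ≠ 0})
    (hconic : ∀ c : ℝ, 0 < c → ∀ q ∈ Γ, (q.1, c • q.2) ∈ Γ)
    (hland : closure Γ ∩
        {q : ((Fin n → ℝ) × (Fin d → ℝ)) × ((Fin n → ℝ) × (Fin d → ℝ)) |
          q.1.2 = 0 ∧ q.2 ≠ 0} ⊆
      {q : ((Fin n → ℝ) × (Fin d → ℝ)) × ((Fin n → ℝ) × (Fin d → ℝ)) |
        q.1.2 = 0 ∧ q.2.1 = 0 ∧ q.2.2 ≠ 0}) :
    ∃ V : Set ((Fin n → ℝ) × (Fin d → ℝ)), IsOpen V ∧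
      {p : (Fin n → ℝ) × (Fin d → ℝ) | p.2 = 0} ⊆ V ∧ V ⊆ U ∧
      ∀ q ∈ Γ, q.1 ∈ V → q.2.2 ≠ 0 := by
  set S := {q ∈ Γ | q.2.2 = 0}
  refine ⟨U \ closure (Prod.fst '' S), hU.sdiff isClosed_closure, fun p hp => ⟨hIU hp, ?_⟩,
    sdiff_subset, fun q hq hqV hq2 => hqV.2 (subset_closure ⟨q, ⟨hq, hq2⟩, rfl⟩)⟩
  intro hpS
  have hSconic : ∀ c : ℝ, 0 < c → ∀ q ∈ S, (q.1, c • q.2) ∈ S := fun c hc q hq =>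
    ⟨hconic c hc q hq.1, by simp [hq.2]⟩
  obtain ⟨w, hw, hpw⟩ := exists_norm_eq_one_mem_closure_of_mem_closure_image_fst hSconic
    (fun q hq => (hΓsub hq.1).2) hpS
  have hw2 : w.2 = 0 :=
    closure_minimal (fun q (hq : q ∈ S) => hq.2) (isClosed_eq (by fun_prop) continuous_const) hpw
  have hw0 : w ≠ 0 := by rintro rfl; simp at hw
  exact (hland ⟨closure_mono (sep_subset _ _) hpw, hp, hw0⟩).2.2 hw2

/-- If `Γ ⊆ T•(U \ I)` is closed conic and its closure satisfies the conormal
landing condition (closure `∩ T•_I U ⊆ N*(I)`), then there is an open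
neighborhood `V` of `I = {h=0}` such that every `(x,h;ξ,η) ∈ Γ` with
`(x,h) ∈ V` has `η ≠ 0`.  Covectors are modeled as pairs `(ξ,η) ∈ ℝⁿ × ℝᵈ`. -/
theorem conormal_landing_gives_neighborhood (n d : ℕ)
    (U : Set ((Fin n → ℝ) × (Fin d → ℝ))) (hU : IsOpen U)
    (hIU : {p : (Fin n → ℝ) × (Fin d → ℝ) | p.2 = 0} ⊆ U)
    (Γ : Set (((Fin n → ℝ) × (Fin d → ℝ)) × ((Fin n → ℝ) × (Fin d → ℝ))))
    (hΓsub : Γ ⊆ (U \ {p : (Fin n → ℝ) × (Fin d → ℝ) | p.2 = 0}) ×ˢ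
      {v : (Fin n → ℝ) × (Fin d → ℝ) | v ≠ 0})
    (hΓclosed : closure Γ ∩
      ((U \ {p : (Fin n → ℝ) × (Fin d → ℝ) | p.2 = 0}) ×ˢ
        {v : (Fin n → ℝ) × (Fin d → ℝ) | v ≠ 0}) ⊆ Γ)
    (hconic : ∀ c : ℝ, 0 < c → ∀ q ∈ Γ, (q.1, c • q.2) ∈ Γ)
    (hland : closure Γ ∩
        {q : ((Fin n → ℝ) × (Fin d → ℝ)) × ((Fin n → ℝ) × (Fin d → ℝ)) |
          q.1.2 = 0 ∧ q.2 ≠ 0} ⊆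
      {q : ((Fin n → ℝ) × (Fin d → ℝ)) × ((Fin n → ℝ) × (Fin d → ℝ)) |
        q.1.2 = 0 ∧ q.2.1 = 0 ∧ q.2.2 ≠ 0}) :
    ∃ V : Set ((Fin n → ℝ) × (Fin d → ℝ)), IsOpen V ∧
      {p : (Fin n → ℝ) × (Fin d → ℝ) | p.2 = 0} ⊆ V ∧ V ⊆ U ∧
      ∀ q ∈ Γ, q.1 ∈ V → q.2.2 ≠ 0 :=
  conormal_landing_gives_neighborhood_general n d U hU hIU Γ hΓsub hconic hland
end

section
/- Let Φ : [0,1] × U → U be smooth with each Φ(λ,·) a diffeomorphism fixing I pointwise, such that the cotangent lift of Φ(λ,·) restricted to N*(I) is the identity for every λ ∈ [0,1]. If Γ ⊂ T•(U \ I) satisfies the conormal landing condition, then Γ′ = ⋃_{λ∈(0,1]} Φ(λ)*Γ also satisfies the conormal landing condition. -/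
open scoped BigOperators

open Filter Topology

/-- Stability of the conormal landing condition: let `Φ : [0,1] × U → U` be smooth
with each `Φ(λ,·)` fixing `I = {h=0}` pointwise and whose cotangent lift restricted
to `N*(I)` is the identity.  If `Γ ⊆ T•(U \ I)` satisfies the conormal landing
condition then so does `Γ′ = ⋃_{λ∈(0,1]} Φ(λ)*Γ`, where
`Φ(λ)*Γ = {(p, ω ∘ dΦ_λ(p)) : (Φ_λ(p), ω) ∈ Γ}` is the pullback.  Cotangent
vectors are modeled as continuous linear functionals. -/
theorem conormal_landing_stable (n d : ℕ)
    (U : Set ((Fin n → ℝ) × (Fin d → ℝ))) (hU : IsOpen U)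
    (hIU : {p : (Fin n → ℝ) × (Fin d → ℝ) | p.2 = 0} ⊆ U)
    (Φ : ℝ → ((Fin n → ℝ) × (Fin d → ℝ)) → (Fin n → ℝ) × (Fin d → ℝ))
    (hΦsmooth : ContDiffOn ℝ (⊤ : ℕ∞) (fun q : ℝ × ((Fin n → ℝ) × (Fin d → ℝ)) => Φ q.1 q.2)
      (Set.Icc (0:ℝ) 1 ×ˢ U))
    (hΦdiffeo : ∀ l ∈ Set.Icc (0:ℝ) 1, Set.BijOn (Φ l) U U)
    (hΦfix : ∀ l ∈ Set.Icc (0:ℝ) 1, ∀ p ∈ U, p.2 = 0 → Φ l p = p)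
    (hΦlift : ∀ l ∈ Set.Icc (0:ℝ) 1, ∀ p ∈ U, p.2 = 0 →
      ∀ ω : ((Fin n → ℝ) × (Fin d → ℝ)) →L[ℝ] ℝ,
        (∀ v : Fin n → ℝ, ω (v, 0) = 0) →
        ω.comp (fderiv ℝ (Φ l) p) = ω)
    (Γ : Set (((Fin n → ℝ) × (Fin d → ℝ)) × (((Fin n → ℝ) × (Fin d → ℝ)) →L[ℝ] ℝ)))
    (hΓsub : Γ ⊆ (U \ {p : (Fin n → ℝ) × (Fin d → ℝ) | p.2 = 0}) ×ˢ
      {ω : ((Fin n → ℝ) × (Fin d → ℝ)) →L[ℝ] ℝ | ω ≠ 0})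
    (hland : closure Γ ∩
        {q : ((Fin n → ℝ) × (Fin d → ℝ)) × (((Fin n → ℝ) × (Fin d → ℝ)) →L[ℝ] ℝ) |
          q.1 ∈ U ∧ q.1.2 = 0 ∧ q.2 ≠ 0} ⊆
      {q : ((Fin n → ℝ) × (Fin d → ℝ)) × (((Fin n → ℝ) × (Fin d → ℝ)) →L[ℝ] ℝ) |
        q.1.2 = 0 ∧ q.2 ≠ 0 ∧ ∀ v : Fin n → ℝ, q.2 (v, 0) = 0}) :
    closure (⋃ l ∈ Set.Ioc (0:ℝ) 1,
        {q : ((Fin n → ℝ) × (Fin d → ℝ)) × (((Fin n → ℝ) × (Fin d → ℝ)) →L[ℝ] ℝ) |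
          q.1 ∈ U ∧ ∃ ω, (Φ l q.1, ω) ∈ Γ ∧ q.2 = ω.comp (fderiv ℝ (Φ l) q.1)}) ∩
      {q : ((Fin n → ℝ) × (Fin d → ℝ)) × (((Fin n → ℝ) × (Fin d → ℝ)) →L[ℝ] ℝ) |
        q.1 ∈ U ∧ q.1.2 = 0 ∧ q.2 ≠ 0} ⊆
      {q : ((Fin n → ℝ) × (Fin d → ℝ)) × (((Fin n → ℝ) × (Fin d → ℝ)) →L[ℝ] ℝ) |
        q.1.2 = 0 ∧ q.2 ≠ 0 ∧ ∀ v : Fin n → ℝ, q.2 (v, 0) = 0} := by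
  classical
  set F : ℝ × ((Fin n → ℝ) × (Fin d → ℝ)) → ((Fin n → ℝ) × (Fin d → ℝ)) := fun q => Φ q.1 q.2 with hFdef
  set S : Set (ℝ × ((Fin n → ℝ) × (Fin d → ℝ))) := Set.Icc (0:ℝ) 1 ×ˢ U with hSdef
  have hUD : UniqueDiffOn ℝ S := (uniqueDiffOn_Icc one_pos).prod hU.uniqueDiffOn
  set J : ((Fin n → ℝ) × (Fin d → ℝ)) →L[ℝ] ℝ × ((Fin n → ℝ) × (Fin d → ℝ)) := (0 : ((Fin n → ℝ) × (Fin d → ℝ)) →L[ℝ] ℝ).prod (ContinuousLinearMap.id ℝ ((Fin n → ℝ) × (Fin d → ℝ))) with hJdef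
  set A : ℝ × ((Fin n → ℝ) × (Fin d → ℝ)) → (((Fin n → ℝ) × (Fin d → ℝ)) →L[ℝ] ((Fin n → ℝ) × (Fin d → ℝ))) := fun q => (fderivWithin ℝ F S q).comp J with hAdef
  have hAcont : ContinuousOn A S := by
    have h1 : ContinuousOn (fderivWithin ℝ F S) S :=
      hΦsmooth.continuousOn_fderivWithin hUD (by simp)
    have h2 : Continuous fun T : (ℝ × ((Fin n → ℝ) × (Fin d → ℝ))) →L[ℝ] ((Fin n → ℝ) × (Fin d → ℝ)) => T.comp J := by
      have := (isBoundedBilinearMap_comp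
        (𝕜 := ℝ) (E := ((Fin n → ℝ) × (Fin d → ℝ))) (F := ℝ × ((Fin n → ℝ) × (Fin d → ℝ))) (G := ((Fin n → ℝ) × (Fin d → ℝ)))).continuous
      exact this.comp (continuous_id.prodMk continuous_const)
    exact h2.comp_continuousOn h1
  have hAder : ∀ l ∈ Set.Icc (0:ℝ) 1, ∀ p ∈ U, HasFDerivAt (Φ l) (A (l, p)) p := by
    intro l hl p hp
    have hmem : ((l, p) : ℝ × ((Fin n → ℝ) × (Fin d → ℝ))) ∈ S := ⟨hl, hp⟩
    have hdF : HasFDerivWithinAt F (fderivWithin ℝ F S (l, p)) S (l, p) :=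
      ((hΦsmooth.differentiableOn (by simp)) (l, p) hmem).hasFDerivWithinAt
    have hin : HasFDerivWithinAt (fun p : ((Fin n → ℝ) × (Fin d → ℝ)) => ((l, p) : ℝ × ((Fin n → ℝ) × (Fin d → ℝ)))) J U p := by
      have h : HasFDerivAt (fun p : ((Fin n → ℝ) × (Fin d → ℝ)) => ((l, p) : ℝ × ((Fin n → ℝ) × (Fin d → ℝ)))) J p :=
        HasFDerivAt.prodMk (hasFDerivAt_const l p) (hasFDerivAt_id p)
      exact h.hasFDerivWithinAt
    have hcomp : HasFDerivWithinAt (fun p : ((Fin n → ℝ) × (Fin d → ℝ)) => F (l, p))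
        ((fderivWithin ℝ F S (l, p)).comp J) U p :=
      hdF.comp p hin (fun y hy => ⟨hl, hy⟩)
    exact hcomp.hasFDerivAt (hU.mem_nhds hp)
  have hfderiv : ∀ l ∈ Set.Icc (0:ℝ) 1, ∀ p ∈ U, fderiv ℝ (Φ l) p = A (l, p) :=
    fun l hl p hp => (hAder l hl p hp).fderiv
  intro q hq
  obtain ⟨hqcl, hqU, hq2, hqne⟩ : q ∈ _ ∧ q.1 ∈ U ∧ q.1.2 = 0 ∧ q.2 ≠ 0 :=
    ⟨hq.1, hq.2.1, hq.2.2.1, hq.2.2.2⟩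
  rw [mem_closure_iff_seq_limit] at hqcl
  obtain ⟨s, hsmem, hslim⟩ := hqcl
  have hsel : ∀ k, ∃ l ∈ Set.Ioc (0:ℝ) 1, (s k).1 ∈ U ∧
      ∃ ω, (Φ l (s k).1, ω) ∈ Γ ∧ (s k).2 = ω.comp (fderiv ℝ (Φ l) (s k).1) := by
    intro k
    have h := hsmem k
    simp only [Set.mem_iUnion, Set.mem_setOf_eq] at h
    obtain ⟨l, hl, h1, h2⟩ := h
    exact ⟨l, hl, h1, h2⟩
  choose l hlIoc hpU ω hωΓ hξ using hsel
  have hlIcc : ∀ k, l k ∈ Set.Icc (0:ℝ) 1 := fun k => Set.Ioc_subset_Icc_self (hlIoc k)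
  obtain ⟨l₀, hl₀, φ, hφ, hlφ⟩ := isCompact_Icc.tendsto_subseq hlIcc
  have hs' : Tendsto (fun k => s (φ k)) atTop (𝓝 q) := hslim.comp hφ.tendsto_atTop
  have hp_lim : Tendsto (fun k => (s (φ k)).1) atTop (𝓝 q.1) :=
    (continuous_fst.tendsto q).comp hs'
  have hξ_lim : Tendsto (fun k => (s (φ k)).2) atTop (𝓝 q.2) :=
    (continuous_snd.tendsto q).comp hs'
  have hSmem : ∀ k, ((l (φ k), (s (φ k)).1) : ℝ × ((Fin n → ℝ) × (Fin d → ℝ))) ∈ S := fun k => ⟨hlIcc _, hpU _⟩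
  have hql : Tendsto (fun k => ((l (φ k), (s (φ k)).1) : ℝ × ((Fin n → ℝ) × (Fin d → ℝ)))) atTop (𝓝 (l₀, q.1)) :=
    hlφ.prodMk_nhds hp_lim
  have hqlS : Tendsto (fun k => ((l (φ k), (s (φ k)).1) : ℝ × ((Fin n → ℝ) × (Fin d → ℝ)))) atTop (𝓝[S] (l₀, q.1)) :=
    tendsto_nhdsWithin_iff.mpr ⟨hql, Filter.Eventually.of_forall hSmem⟩
  have hA_lim : Tendsto (fun k => A (l (φ k), (s (φ k)).1)) atTop (𝓝 (A (l₀, q.1))) :=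
    (hAcont (l₀, q.1) ⟨hl₀, hqU⟩).tendsto.comp hqlS
  have hy_lim : Tendsto (fun k => Φ (l (φ k)) ((s (φ k)).1)) atTop (𝓝 (Φ l₀ q.1)) :=
    (hΦsmooth.continuousOn (l₀, q.1) ⟨hl₀, hqU⟩).tendsto.comp hqlS
  have hfixx : Φ l₀ q.1 = q.1 := hΦfix l₀ hl₀ q.1 hqU hq2
  set A₀ : ((Fin n → ℝ) × (Fin d → ℝ)) →L[ℝ] ((Fin n → ℝ) × (Fin d → ℝ)) := A (l₀, q.1) with hA₀def
  have hA₀ : HasFDerivAt (Φ l₀) A₀ q.1 := hAder l₀ hl₀ q.1 hqU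
  have hfd₀ : fderiv ℝ (Φ l₀) q.1 = A₀ := hA₀.fderiv
  -- the second component of `A₀` is the projection
  have h2 : ∀ u : ((Fin n → ℝ) × (Fin d → ℝ)), (A₀ u).2 = u.2 := by
    intro u
    have hco : ∀ i : Fin d, (A₀ u).2 i = u.2 i := by
      intro i
      set ωi : ((Fin n → ℝ) × (Fin d → ℝ)) →L[ℝ] ℝ := (ContinuousLinearMap.proj i).comp
        (ContinuousLinearMap.snd ℝ (Fin n → ℝ) (Fin d → ℝ)) with hωidef
      have hv : ∀ v : Fin n → ℝ, ωi (v, 0) = 0 := fun v => rfl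
      have hl := hΦlift l₀ hl₀ q.1 hqU hq2 ωi hv
      rw [hfd₀] at hl
      have := congrArg (fun T : ((Fin n → ℝ) × (Fin d → ℝ)) →L[ℝ] ℝ => T u) hl
      simpa [hωidef] using this
    exact funext hco
  -- `A₀` is the identity on horizontal vectors
  have h1 : ∀ v : Fin n → ℝ, A₀ ((v, 0) : ((Fin n → ℝ) × (Fin d → ℝ))) = ((v, 0) : ((Fin n → ℝ) × (Fin d → ℝ))) := by
    intro v
    have hg : HasDerivAt (fun t : ℝ => q.1 + t • ((v, (0 : Fin d → ℝ)) : ((Fin n → ℝ) × (Fin d → ℝ))))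
        ((v, (0 : Fin d → ℝ)) : ((Fin n → ℝ) × (Fin d → ℝ))) 0 := by
      simpa using ((hasDerivAt_id (0:ℝ)).smul_const ((v, (0 : Fin d → ℝ)) : ((Fin n → ℝ) × (Fin d → ℝ)))).const_add q.1
    have hmemU : ∀ t : ℝ, q.1 + t • ((v, (0 : Fin d → ℝ)) : ((Fin n → ℝ) × (Fin d → ℝ))) ∈ U := by
      intro t
      apply hIU
      show (q.1 + t • ((v, (0 : Fin d → ℝ)) : ((Fin n → ℝ) × (Fin d → ℝ)))).2 = 0
      simp [hq2]
    have hA₀' : HasFDerivAt (Φ l₀) A₀ (q.1 + (0:ℝ) • ((v, (0 : Fin d → ℝ)) : ((Fin n → ℝ) × (Fin d → ℝ)))) := by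
      simpa using hA₀
    have hcomp0 := HasFDerivAt.comp_hasDerivAt (hf := hg) (hl := hA₀')
    have hcomp : HasDerivAt (fun t : ℝ => Φ l₀ (q.1 + t • ((v, (0 : Fin d → ℝ)) : ((Fin n → ℝ) × (Fin d → ℝ)))))
        (A₀ ((v, 0) : ((Fin n → ℝ) × (Fin d → ℝ)))) 0 := by
      simpa [Function.comp_def] using hcomp0
    have heq : (fun t : ℝ => Φ l₀ (q.1 + t • ((v, (0 : Fin d → ℝ)) : ((Fin n → ℝ) × (Fin d → ℝ))))) =
        fun t : ℝ => q.1 + t • ((v, (0 : Fin d → ℝ)) : ((Fin n → ℝ) × (Fin d → ℝ))) := by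
      funext t
      exact hΦfix l₀ hl₀ _ (hmemU t) (by simp [hq2])
    rw [heq] at hcomp
    exact hcomp.unique hg
  set B : (Fin d → ℝ) →L[ℝ] (Fin n → ℝ) :=
    (ContinuousLinearMap.fst ℝ (Fin n → ℝ) (Fin d → ℝ)).comp
      (A₀.comp (ContinuousLinearMap.inr ℝ (Fin n → ℝ) (Fin d → ℝ))) with hBdef
  have hform : ∀ (v : Fin n → ℝ) (w : Fin d → ℝ), A₀ ((v, w) : ((Fin n → ℝ) × (Fin d → ℝ))) = ((v + B w, w) : ((Fin n → ℝ) × (Fin d → ℝ))) := by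
    intro v w
    have hsplit : ((v, w) : ((Fin n → ℝ) × (Fin d → ℝ))) = ((v, 0) : ((Fin n → ℝ) × (Fin d → ℝ))) + ((0, w) : ((Fin n → ℝ) × (Fin d → ℝ))) := by
      ext <;> simp
    have h02 : A₀ ((0, w) : ((Fin n → ℝ) × (Fin d → ℝ))) = ((B w, w) : ((Fin n → ℝ) × (Fin d → ℝ))) := by
      have hfst : (A₀ ((0, w) : ((Fin n → ℝ) × (Fin d → ℝ)))).1 = B w := by simp [hBdef]
      have hsnd : (A₀ ((0, w) : ((Fin n → ℝ) × (Fin d → ℝ)))).2 = w := h2 ((0, w) : ((Fin n → ℝ) × (Fin d → ℝ)))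
      exact Prod.ext hfst hsnd
    rw [hsplit, map_add, h1 v, h02]
    ext <;> simp
  set Ainv : ((Fin n → ℝ) × (Fin d → ℝ)) →L[ℝ] ((Fin n → ℝ) × (Fin d → ℝ)) :=
    ((ContinuousLinearMap.fst ℝ (Fin n → ℝ) (Fin d → ℝ)) -
      B.comp (ContinuousLinearMap.snd ℝ (Fin n → ℝ) (Fin d → ℝ))).prod
      (ContinuousLinearMap.snd ℝ (Fin n → ℝ) (Fin d → ℝ)) with hAinvdef
  have hAinv_apply : ∀ u : ((Fin n → ℝ) × (Fin d → ℝ)), Ainv u = ((u.1 - B u.2, u.2) : ((Fin n → ℝ) × (Fin d → ℝ))) := fun u => rfl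
  have hinvA : ∀ u : ((Fin n → ℝ) × (Fin d → ℝ)), Ainv (A₀ u) = u := by
    rintro ⟨v, w⟩
    rw [hform v w, hAinv_apply]
    ext <;> simp
  have hAinv : ∀ u : ((Fin n → ℝ) × (Fin d → ℝ)), A₀ (Ainv u) = u := by
    rintro ⟨v, w⟩
    rw [hAinv_apply, hform (v - B w) w]
    ext <;> simp
  have hmul₁ : A₀ * Ainv = 1 := by
    refine ContinuousLinearMap.ext fun u => ?_
    simpa [ContinuousLinearMap.mul_apply] using hAinv u
  have hmul₂ : Ainv * A₀ = 1 := by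
    refine ContinuousLinearMap.ext fun u => ?_
    simpa [ContinuousLinearMap.mul_apply] using hinvA u
  set u₀ : (((Fin n → ℝ) × (Fin d → ℝ)) →L[ℝ] ((Fin n → ℝ) × (Fin d → ℝ)))ˣ := ⟨A₀, Ainv, hmul₁, hmul₂⟩ with hu₀def
  have hunit : IsUnit A₀ := ⟨u₀, rfl⟩
  have hRinv : Ring.inverse A₀ = Ainv := by
    have := Ring.inverse_unit u₀
    simpa [hu₀def] using this
  -- eventually the differentials are invertible
  have hunits_ev : ∀ᶠ k in atTop, IsUnit (A (l (φ k), (s (φ k)).1)) := by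
    have hopen : {T : ((Fin n → ℝ) × (Fin d → ℝ)) →L[ℝ] ((Fin n → ℝ) × (Fin d → ℝ)) | IsUnit T} ∈ 𝓝 A₀ := Units.isOpen.mem_nhds hunit
    exact hA_lim.eventually (eventually_of_mem hopen fun y hy => hy)
  -- continuity of the inverse
  have hinv_lim : Tendsto (fun k => Ring.inverse (A (l (φ k), (s (φ k)).1))) atTop (𝓝 Ainv) := by
    have h := (NormedRing.inverse_continuousAt u₀).tendsto.comp hA_lim
    rw [Ring.inverse_unit u₀] at h
    simpa [hu₀def, Function.comp_def] using h
  -- recover the covectors upstairs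
  have hω_eq : ∀ᶠ k in atTop, ω (φ k) =
      ((s (φ k)).2).comp (Ring.inverse (A (l (φ k), (s (φ k)).1))) := by
    filter_upwards [hunits_ev] with k hk
    obtain ⟨u, hu⟩ := hk
    have hfd : fderiv ℝ (Φ (l (φ k))) ((s (φ k)).1) = A (l (φ k), (s (φ k)).1) :=
      hfderiv _ (hlIcc _) _ (hpU _)
    have hcompk : (s (φ k)).2 = (ω (φ k)).comp (A (l (φ k), (s (φ k)).1)) := by
      rw [← hfd]; exact hξ (φ k)
    rw [← hu, Ring.inverse_unit u]
    refine ContinuousLinearMap.ext fun v => ?_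
    have hval : (u : ((Fin n → ℝ) × (Fin d → ℝ)) →L[ℝ] ((Fin n → ℝ) × (Fin d → ℝ))) ((↑u⁻¹ : ((Fin n → ℝ) × (Fin d → ℝ)) →L[ℝ] ((Fin n → ℝ) × (Fin d → ℝ))) v) = v := by
      have hm : (↑u * ↑u⁻¹ : ((Fin n → ℝ) × (Fin d → ℝ)) →L[ℝ] ((Fin n → ℝ) × (Fin d → ℝ))) = 1 := u.mul_inv
      calc (u : ((Fin n → ℝ) × (Fin d → ℝ)) →L[ℝ] ((Fin n → ℝ) × (Fin d → ℝ))) ((↑u⁻¹ : ((Fin n → ℝ) × (Fin d → ℝ)) →L[ℝ] ((Fin n → ℝ) × (Fin d → ℝ))) v)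
          = (↑u * ↑u⁻¹ : ((Fin n → ℝ) × (Fin d → ℝ)) →L[ℝ] ((Fin n → ℝ) × (Fin d → ℝ))) v := rfl
        _ = v := by rw [hm]; rfl
    have h2' := congrArg (fun T : ((Fin n → ℝ) × (Fin d → ℝ)) →L[ℝ] ℝ => T ((↑u⁻¹ : ((Fin n → ℝ) × (Fin d → ℝ)) →L[ℝ] ((Fin n → ℝ) × (Fin d → ℝ))) v)) hcompk
    simp only [ContinuousLinearMap.comp_apply] at h2' ⊢
    rw [h2', ← hu, hval]
  have hω_lim : Tendsto (fun k => ω (φ k)) atTop (𝓝 (q.2.comp Ainv)) := by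
    have hpair : Tendsto (fun k => (((s (φ k)).2, Ring.inverse (A (l (φ k), (s (φ k)).1))) :
        (((Fin n → ℝ) × (Fin d → ℝ)) →L[ℝ] ℝ) × (((Fin n → ℝ) × (Fin d → ℝ)) →L[ℝ] ((Fin n → ℝ) × (Fin d → ℝ))))) atTop (𝓝 (q.2, Ainv)) :=
      hξ_lim.prodMk_nhds hinv_lim
    have hcontcomp : Continuous fun p : (((Fin n → ℝ) × (Fin d → ℝ)) →L[ℝ] ℝ) × (((Fin n → ℝ) × (Fin d → ℝ)) →L[ℝ] ((Fin n → ℝ) × (Fin d → ℝ))) => p.1.comp p.2 :=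
      (isBoundedBilinearMap_comp (𝕜 := ℝ) (E := ((Fin n → ℝ) × (Fin d → ℝ))) (F := ((Fin n → ℝ) × (Fin d → ℝ))) (G := ℝ)).continuous
    have h := (hcontcomp.tendsto (q.2, Ainv)).comp hpair
    exact h.congr' (hω_eq.mono fun k hk => hk.symm)
  -- the limiting covector lies over `x` in the closure of `Γ`
  have hclΓ : ((q.1, q.2.comp Ainv) : ((Fin n → ℝ) × (Fin d → ℝ)) × (((Fin n → ℝ) × (Fin d → ℝ)) →L[ℝ] ℝ)) ∈ closure Γ := by
    have htend : Tendsto (fun k => ((Φ (l (φ k)) ((s (φ k)).1), ω (φ k)) : ((Fin n → ℝ) × (Fin d → ℝ)) × (((Fin n → ℝ) × (Fin d → ℝ)) →L[ℝ] ℝ)))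
        atTop (𝓝 (q.1, q.2.comp Ainv)) := by
      have := hy_lim.prodMk_nhds hω_lim
      rwa [hfixx] at this
    exact mem_closure_of_tendsto htend (Filter.Eventually.of_forall fun k => hωΓ (φ k))
  have hq2A : q.2 = (q.2.comp Ainv).comp A₀ := by
    refine ContinuousLinearMap.ext fun u => ?_
    simp [ContinuousLinearMap.comp_apply, hinvA u]
  have hω_ne : q.2.comp Ainv ≠ 0 := by
    intro h0
    apply hqne
    rw [hq2A, h0]
    exact ContinuousLinearMap.zero_comp _
  obtain ⟨-, -, hωcon⟩ := hland ⟨hclΓ, hqU, hq2, hω_ne⟩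
  have hfinal := hΦlift l₀ hl₀ q.1 hqU hq2 (q.2.comp Ainv) hωcon
  rw [hfd₀] at hfinal
  have hq2eq : q.2 = q.2.comp Ainv := by
    conv_lhs => rw [hq2A]
    exact hfinal
  refine ⟨hq2, hqne, fun v => ?_⟩
  rw [hq2eq]
  exact hωcon v
end
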